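/- arXiv:2403.08672 — 5 statements merged into one kernel-verified Lean document; each statement's English description precedes it below -/
import Mathlib

section
/- Let Γ > 0 and let f₁, f₂ : [0,Γ]×(0,∞) → ℝ be nonnegative measurable functions such that ∫₀^∞ ρ f₁(ξ,ρ)dρ = 1 for every ξ ∈ [0,Γ] and sup_{ξ∈[0,Γ]} ∫₀^∞ ρ f₂(ξ,ρ)dρ < ∞. Then for all 0 ≤ ν ≤ ς ≤ Γ and all ε > 0, exp(G(ν,ε,f₁) − G(ς,ε,f₁)) − exp(G(ν,ε,f₂) − G(ς,ε,f₂)) ≤ (1/e) · sup_{ξ∈[0,Γ]} ∫₀^∞ ρ |f₁(ξ,ρ) − f₂(ξ,ρ)| dρ. -/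
open MeasureTheory Set

/-- `G(ς, ε, f) = ∫₀^ς ∫₀^∞ ε ρ f(ν, ρ) dρ dν`. -/
noncomputable def cbeG (f : ℝ → ℝ → ℝ) (ς ε : ℝ) : ℝ :=
  ∫ ν in (0:ℝ)..ς, ∫ ρ in Ioi (0:ℝ), ε * ρ * f ν ρ

/-- If `f₁, f₂ : [0,Γ]×(0,∞) → ℝ` are nonnegative measurable,
`∫₀^∞ ρ f₁(ξ,ρ) dρ = 1` on `[0,Γ]`, and `sup_{ξ∈[0,Γ]} ∫₀^∞ ρ f₂(ξ,ρ) dρ < ∞`, then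
for all `0 ≤ ν ≤ ς ≤ Γ` and `ε > 0`,
`exp(G(ν,ε,f₁) − G(ς,ε,f₁)) − exp(G(ν,ε,f₂) − G(ς,ε,f₂))
  ≤ (1/e) · sup_{ξ∈[0,Γ]} ∫₀^∞ ρ |f₁(ξ,ρ) − f₂(ξ,ρ)| dρ`. -/
theorem cbe_F_bound
    (Γ : ℝ) (hΓ : 0 < Γ) (f₁ f₂ : ℝ → ℝ → ℝ)
    (hmeas₁ : Measurable (Function.uncurry f₁))
    (hmeas₂ : Measurable (Function.uncurry f₂))
    (hpos₁ : ∀ ξ ∈ Icc (0:ℝ) Γ, ∀ ρ > (0:ℝ), 0 ≤ f₁ ξ ρ)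
    (hpos₂ : ∀ ξ ∈ Icc (0:ℝ) Γ, ∀ ρ > (0:ℝ), 0 ≤ f₂ ξ ρ)
    (hmass₁ : ∀ ξ ∈ Icc (0:ℝ) Γ, (∫ ρ in Ioi (0:ℝ), ρ * f₁ ξ ρ) = 1)
    (hbdd₂ : BddAbove ((fun ξ => ∫ ρ in Ioi (0:ℝ), ρ * f₂ ξ ρ) '' Icc (0:ℝ) Γ)) :
    ∀ ν ς ε : ℝ, 0 ≤ ν → ν ≤ ς → ς ≤ Γ → 0 < ε →
      Real.exp (cbeG f₁ ν ε - cbeG f₁ ς ε) - Real.exp (cbeG f₂ ν ε - cbeG f₂ ς ε) ≤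
        (1 / Real.exp 1) *
          ⨆ ξ ∈ Icc (0:ℝ) Γ, ∫ ρ in Ioi (0:ℝ), ρ * |f₁ ξ ρ - f₂ ξ ρ| := by
  intro ν ς ε hν hνς hςΓ hε
  have hς0 : (0:ℝ) ≤ ς := hν.trans hνς
  set m₂ : ℝ → ℝ := fun ξ => ∫ ρ in Ioi (0:ℝ), ρ * f₂ ξ ρ with hm₂def
  set I : ℝ → ℝ := fun ξ => ∫ ρ in Ioi (0:ℝ), ρ * |f₁ ξ ρ - f₂ ξ ρ| with hIdef
  obtain ⟨C, hC⟩ := hbdd₂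
  have hCub : ∀ ξ ∈ Icc (0:ℝ) Γ, m₂ ξ ≤ C := fun ξ hξ => hC (mem_image_of_mem _ hξ)
  have hm₂nonneg : ∀ ξ ∈ Icc (0:ℝ) Γ, 0 ≤ m₂ ξ := fun ξ hξ =>
    setIntegral_nonneg measurableSet_Ioi fun ρ hρ => mul_nonneg (le_of_lt hρ) (hpos₂ ξ hξ ρ hρ)
  have hInonneg : ∀ ξ : ℝ, 0 ≤ I ξ := fun ξ =>
    setIntegral_nonneg measurableSet_Ioi fun ρ hρ =>
      mul_nonneg (le_of_lt hρ) (abs_nonneg _)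
  have hC0 : 0 ≤ C :=
    le_trans (hm₂nonneg 0 ⟨le_refl 0, hΓ.le⟩) (hCub 0 ⟨le_refl 0, hΓ.le⟩)
  -- integrability of ρ f₁
  have hint₁ : ∀ ξ ∈ Icc (0:ℝ) Γ, IntegrableOn (fun ρ => ρ * f₁ ξ ρ) (Ioi (0:ℝ)) := by
    intro ξ hξ
    by_contra h
    have h0 := integral_undef h
    rw [hmass₁ ξ hξ] at h0
    norm_num at h0
  -- the key integrability transfer: if ρ|f₁-f₂| is integrable, then so is ρ(f₂-f₁)
  have hdiff : ∀ ξ ∈ Icc (0:ℝ) Γ,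
      IntegrableOn (fun ρ => ρ * |f₁ ξ ρ - f₂ ξ ρ|) (Ioi (0:ℝ)) →
      IntegrableOn (fun ρ => ρ * (f₂ ξ ρ - f₁ ξ ρ)) (Ioi (0:ℝ)) := by
    intro ξ _ hint
    refine Integrable.mono' hint
      ((measurable_id.mul ((hmeas₂.comp measurable_prodMk_left).sub
        (hmeas₁.comp measurable_prodMk_left))).aestronglyMeasurable) ?_
    filter_upwards [ae_restrict_mem measurableSet_Ioi] with ρ hρ
    rw [Real.norm_eq_abs, abs_mul, abs_of_pos hρ, abs_sub_comm]
  -- I is bounded above by 1 + C on [0, Γ]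
  have hIub : ∀ ξ ∈ Icc (0:ℝ) Γ, I ξ ≤ 1 + C := by
    intro ξ hξ
    by_cases hint : IntegrableOn (fun ρ => ρ * |f₁ ξ ρ - f₂ ξ ρ|) (Ioi (0:ℝ))
    · have hd := hdiff ξ hξ hint
      have hint₂' : IntegrableOn (fun ρ => ρ * f₂ ξ ρ) (Ioi (0:ℝ)) := by
        have h' := (hint₁ ξ hξ).add hd
        exact MeasureTheory.IntegrableOn.congr_fun h' (fun ρ _ => by simp only [Pi.add_apply]; ring) measurableSet_Ioi
      have hsum : IntegrableOn (fun ρ => ρ * f₁ ξ ρ + ρ * f₂ ξ ρ) (Ioi (0:ℝ)) :=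
        (hint₁ ξ hξ).add hint₂'
      have hle : I ξ ≤ ∫ ρ in Ioi (0:ℝ), (ρ * f₁ ξ ρ + ρ * f₂ ξ ρ) := by
        refine setIntegral_mono_on hint hsum measurableSet_Ioi fun ρ hρ => ?_
        have h1 := hpos₁ ξ hξ ρ hρ
        have h2 := hpos₂ ξ hξ ρ hρ
        have habs : |f₁ ξ ρ - f₂ ξ ρ| ≤ f₁ ξ ρ + f₂ ξ ρ := by
          rw [abs_sub_le_iff]; constructor <;> linarith
        nlinarith [le_of_lt (mem_Ioi.mp hρ)]
      rw [integral_add (hint₁ ξ hξ) hint₂', hmass₁ ξ hξ] at hle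
      exact hle.trans (by linarith [hCub ξ hξ])
    · rw [hIdef]
      simp only
      rw [integral_undef hint]
      linarith
  -- the sup M
  set g : ℝ → ℝ := fun ξ => ⨆ _ : ξ ∈ Icc (0:ℝ) Γ, I ξ with hgdef
  set M : ℝ := ⨆ ξ, g ξ with hMdef
  have hgub : ∀ ξ, g ξ ≤ 1 + C := by
    intro ξ
    by_cases hξ : ξ ∈ Icc (0:ℝ) Γ
    · rw [hgdef]; simp only; rw [ciSup_pos hξ]; exact hIub ξ hξ
    · rw [hgdef]; simp only; rw [ciSup_neg hξ, Real.sSup_empty]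
      linarith
  have hBdd : BddAbove (Set.range g) := ⟨1 + C, by rintro _ ⟨ξ, rfl⟩; exact hgub ξ⟩
  have hIM : ∀ ξ ∈ Icc (0:ℝ) Γ, I ξ ≤ M := by
    intro ξ hξ
    exact (ciSup_pos (f := fun _ : ξ ∈ Icc (0:ℝ) Γ => I ξ) hξ).symm.trans_le (le_ciSup hBdd ξ)
  have hM0 : 0 ≤ M := by
    refine Real.iSup_nonneg fun ξ => ?_
    exact Real.iSup_nonneg fun _ => hInonneg ξ
  -- value of cbeG f₁
  have hG₁ : ∀ σ : ℝ, 0 ≤ σ → σ ≤ Γ → cbeG f₁ σ ε = ε * σ := by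
    intro σ h0 hσ
    have hEq : EqOn (fun x => ∫ ρ in Ioi (0:ℝ), ε * ρ * f₁ x ρ) (fun _ => ε) (uIcc 0 σ) := by
      intro x hx
      rw [uIcc_of_le h0] at hx
      have hx' : x ∈ Icc (0:ℝ) Γ := ⟨hx.1, hx.2.trans hσ⟩
      simp only
      have : (∫ ρ in Ioi (0:ℝ), ε * ρ * f₁ x ρ) = ε * ∫ ρ in Ioi (0:ℝ), ρ * f₁ x ρ := by
        simp_rw [mul_assoc]
        exact integral_const_mul ε _
      rw [this, hmass₁ x hx', mul_one]
    rw [cbeG, intervalIntegral.integral_congr hEq, intervalIntegral.integral_const]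
    simp [smul_eq_mul, mul_comm]
  -- measurability of m₂
  have hm₂meas : Measurable m₂ := by
    have hsm : StronglyMeasurable fun p : ℝ × ℝ => p.2 * f₂ p.1 p.2 :=
      (measurable_snd.mul hmeas₂).stronglyMeasurable
    exact hsm.integral_prod_right'.measurable
  -- the inner integral of cbeG f₂
  set H : ℝ → ℝ := fun ξ => ∫ ρ in Ioi (0:ℝ), ε * ρ * f₂ ξ ρ with hHdef
  have hHm₂ : ∀ ξ, H ξ = ε * m₂ ξ := by
    intro ξ
    rw [hHdef]; simp only
    simp_rw [mul_assoc]
    exact integral_const_mul ε _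
  have hHmeas : Measurable H := by
    have : H = fun ξ => ε * m₂ ξ := funext hHm₂
    rw [this]; exact measurable_const.mul hm₂meas
  -- interval integrability of H on subintervals of [0, Γ]
  have hHint : ∀ a b : ℝ, 0 ≤ a → a ≤ b → b ≤ Γ → IntervalIntegrable H volume a b := by
    intro a b ha hab hbΓ
    rw [intervalIntegrable_iff_integrableOn_Ioc_of_le hab]
    refine Measure.integrableOn_of_bounded (M := ε * C) (measure_Ioc_lt_top).ne
      hHmeas.aestronglyMeasurable ?_
    rw [ae_restrict_iff' measurableSet_Ioc]
    filter_upwards with x hx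
    have hx' : x ∈ Icc (0:ℝ) Γ := ⟨ha.trans hx.1.le, hx.2.trans hbΓ⟩
    rw [Real.norm_eq_abs, hHm₂ x, abs_mul, abs_of_pos hε,
      abs_of_nonneg (hm₂nonneg x hx')]
    exact mul_le_mul_of_nonneg_left (hCub x hx') hε.le
  -- difference of cbeG f₂
  have hGdiff : cbeG f₂ ς ε - cbeG f₂ ν ε = ∫ ξ in ν..ς, H ξ := by
    rw [cbeG, cbeG]
    exact intervalIntegral.integral_interval_sub_left (hHint 0 ς le_rfl hς0 hςΓ)
      (hHint 0 ν le_rfl hν (hνς.trans hςΓ))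
  -- pointwise bound m₂ ≤ 1 + M
  have hm₂M : ∀ ξ ∈ Icc (0:ℝ) Γ, m₂ ξ ≤ 1 + M := by
    intro ξ hξ
    by_cases hint₂' : IntegrableOn (fun ρ => ρ * f₂ ξ ρ) (Ioi (0:ℝ))
    · have hd : IntegrableOn (fun ρ => ρ * f₂ ξ ρ - ρ * f₁ ξ ρ) (Ioi (0:ℝ)) :=
        hint₂'.sub (hint₁ ξ hξ)
      have habsint : IntegrableOn (fun ρ => ρ * |f₁ ξ ρ - f₂ ξ ρ|) (Ioi (0:ℝ)) := by
        refine hd.abs.congr ?_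
        filter_upwards [ae_restrict_mem measurableSet_Ioi] with ρ hρ
        rw [← mul_sub, abs_mul, abs_of_pos hρ, abs_sub_comm]
      have hle : (∫ ρ in Ioi (0:ℝ), (ρ * f₂ ξ ρ - ρ * f₁ ξ ρ)) ≤ I ξ := by
        refine setIntegral_mono_on hd habsint measurableSet_Ioi fun ρ hρ => ?_
        rw [← mul_sub]
        refine mul_le_mul_of_nonneg_left ?_ (le_of_lt hρ)
        rw [abs_sub_comm]
        exact le_abs_self _
      rw [integral_sub hint₂' (hint₁ ξ hξ), hmass₁ ξ hξ] at hle
      have := hIM ξ hξ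
      rw [hm₂def]
      simp only at hle ⊢
      linarith
    · rw [hm₂def]; simp only
      rw [integral_undef hint₂']
      linarith
  -- bound the interval integral
  have hbound : (∫ ξ in ν..ς, H ξ) - ε * (ς - ν) ≤ ε * (ς - ν) * M := by
    have h1 : (∫ ξ in ν..ς, H ξ) ≤ ∫ _ in ν..ς, (ε * (1 + M)) := by
      refine intervalIntegral.integral_mono_on hνς
        ((hHint 0 ς le_rfl hς0 hςΓ).mono_set ?_) intervalIntegrable_const ?_
      · rw [uIcc_of_le hνς, uIcc_of_le hς0]
        exact Icc_subset_Icc hν le_rfl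
      · intro x hx
        have hx' : x ∈ Icc (0:ℝ) Γ := ⟨hν.trans hx.1, hx.2.trans hςΓ⟩
        rw [hHm₂ x]
        exact mul_le_mul_of_nonneg_left (hm₂M x hx') hε.le
    rw [intervalIntegral.integral_const, smul_eq_mul] at h1
    nlinarith
  -- final assembly
  set t : ℝ := ε * (ς - ν) with htdef
  have ht0 : 0 ≤ t := mul_nonneg hε.le (by linarith)
  have hA : cbeG f₁ ν ε - cbeG f₁ ς ε = -t := by
    rw [hG₁ ν hν (hνς.trans hςΓ), hG₁ ς hς0 hςΓ]; ring
  set B : ℝ := cbeG f₂ ς ε - cbeG f₂ ν ε with hBdef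
  have hB : cbeG f₂ ν ε - cbeG f₂ ς ε = -B := by rw [hBdef]; ring
  have hBt : B - t ≤ t * M := by
    rw [hGdiff]
    exact hbound
  rw [hA, hB]
  have hkey : Real.exp (-t) - Real.exp (-B) ≤ Real.exp (-t) * (B - t) := by
    have h1 : Real.exp (-B) = Real.exp (-t) * Real.exp (t - B) := by
      rw [← Real.exp_add]; ring_nf
    have h2 := Real.add_one_le_exp (t - B)
    have h3 := Real.exp_pos (-t)
    nlinarith
  have hstep : Real.exp (-t) * (B - t) ≤ Real.exp (-t) * (t * M) :=
    mul_le_mul_of_nonneg_left hBt (Real.exp_pos (-t)).le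
  have hte : t * Real.exp (-t) ≤ 1 / Real.exp 1 := by
    rw [le_div_iff₀ (Real.exp_pos 1), mul_assoc]
    have h5 : Real.exp (-t) * Real.exp 1 = Real.exp (1 - t) := by
      rw [← Real.exp_add]; ring_nf
    rw [h5]
    have h1 : t ≤ Real.exp (t - 1) := by
      have := Real.add_one_le_exp (t - 1); linarith
    calc t * Real.exp (1 - t) ≤ Real.exp (t - 1) * Real.exp (1 - t) :=
          mul_le_mul_of_nonneg_right h1 (Real.exp_pos _).le
      _ = 1 := by rw [← Real.exp_add]; norm_num
  have hfinal : Real.exp (-t) * (t * M) ≤ (1 / Real.exp 1) * M := by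
    calc Real.exp (-t) * (t * M) = (t * Real.exp (-t)) * M := by ring
      _ ≤ (1 / Real.exp 1) * M := mul_le_mul_of_nonneg_right hte hM0
  calc Real.exp (-t) - Real.exp (-B) ≤ Real.exp (-t) * (B - t) := hkey
    _ ≤ Real.exp (-t) * (t * M) := hstep
    _ ≤ (1 / Real.exp 1) * M := hfinal
end

section
/- The function f(ς,ε) = (1+ς)²·exp(−ε(1+ς)) solves the collision-induced breakage equation with collision kernel K(ε,ρ) = ερ and breakage distribution b(ε,ρ,σ) = 2/ρ together with initial datum f(0,ε) = e^{−ε}: for every ς ≥ 0 and ε > 0, the partial derivative ∂f/∂ς(ς,ε) exists and equals ∫₀^∞∫_ε^∞ 2σ f(ς,ρ)f(ς,σ) dρ dσ − ∫₀^∞ ερ f(ς,ε)f(ς,ρ) dρ, and f(0,ε) = e^{−ε}. -/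
open MeasureTheory Set

lemma aux_exp_int {a : ℝ} (ha : 0 < a) (ε : ℝ) :
    ∫ x in Ioi ε, Real.exp (-(x * a)) = Real.exp (-(ε * a)) / a := by
  have := MeasureTheory.integral_comp_mul_left_Ioi (fun y => Real.exp (-y)) ε ha
  simp only [smul_eq_mul] at this
  calc ∫ x in Ioi ε, Real.exp (-(x * a))
      = ∫ x in Ioi ε, Real.exp (-(a * x)) := by
        refine setIntegral_congr_fun measurableSet_Ioi (fun x _ => ?_)
        rw [mul_comm]
    _ = a⁻¹ * ∫ y in Ioi (a * ε), Real.exp (-y) := this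
    _ = Real.exp (-(ε * a)) / a := by
        rw [integral_exp_neg_Ioi]
        rw [mul_comm a ε]; ring

lemma aux_mul_exp_int {a : ℝ} (ha : 0 < a) :
    ∫ x in Ioi (0:ℝ), x * Real.exp (-(x * a)) = 1 / a ^ 2 := by
  have := Real.integral_rpow_mul_exp_neg_mul_Ioi (a := 2) (r := a) (by norm_num) ha
  rw [show (2:ℝ) - 1 = 1 by norm_num] at this
  calc ∫ x in Ioi (0:ℝ), x * Real.exp (-(x * a))
      = ∫ x in Ioi (0:ℝ), x ^ (1:ℝ) * Real.exp (-(a * x)) := by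
        refine setIntegral_congr_fun measurableSet_Ioi (fun x hx => ?_)
        rw [Real.rpow_one, mul_comm a x]
    _ = (1 / a) ^ (2:ℝ) * Real.Gamma 2 := this
    _ = 1 / a ^ 2 := by
        rw [Real.Gamma_two, show ((2:ℝ) = ((2:ℕ):ℝ)) by norm_num, Real.rpow_natCast]
        rw [div_pow, one_pow, mul_one]

/-- `f(ς,ε) = (1+ς)² exp(−ε(1+ς))` solves the CBE with `K(ε,ρ)=ερ`,
`b(ε,ρ,σ)=2/ρ` (so `K(ρ,σ)b(ε,ρ,σ) = 2σ`) and initial datum `f(0,ε) = e^{−ε}`: for every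
`ς ≥ 0` and `ε > 0`, `∂f/∂ς` exists and equals the birth minus death terms, and
`f(0,ε) = e^{−ε}`. -/
theorem cbe_exact_solution :
    ∀ ς : ℝ, 0 ≤ ς → ∀ ε : ℝ, 0 < ε →
      HasDerivAt (fun t : ℝ => (1 + t) ^ 2 * Real.exp (-(ε * (1 + t))))
        ((∫ σ in Ioi (0:ℝ), ∫ ρ in Ioi ε,
            2 * σ * ((1 + ς) ^ 2 * Real.exp (-(ρ * (1 + ς)))) *
              ((1 + ς) ^ 2 * Real.exp (-(σ * (1 + ς))))) -
          ∫ ρ in Ioi (0:ℝ),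
            ε * ρ * ((1 + ς) ^ 2 * Real.exp (-(ε * (1 + ς)))) *
              ((1 + ς) ^ 2 * Real.exp (-(ρ * (1 + ς))))) ς ∧
      (1 + (0:ℝ)) ^ 2 * Real.exp (-(ε * (1 + (0:ℝ)))) = Real.exp (-ε) := by
  intro ς hς ε hε
  set a : ℝ := 1 + ς with ha_def
  have ha : 0 < a := by positivity
  constructor
  · -- compute birth term
    have birth : (∫ σ in Ioi (0:ℝ), ∫ ρ in Ioi ε,
            2 * σ * (a ^ 2 * Real.exp (-(ρ * a))) * (a ^ 2 * Real.exp (-(σ * a))))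
        = 2 * a * Real.exp (-(ε * a)) := by
      have inner : ∀ σ : ℝ, (∫ ρ in Ioi ε,
            2 * σ * (a ^ 2 * Real.exp (-(ρ * a))) * (a ^ 2 * Real.exp (-(σ * a))))
          = (2 * a ^ 3 * Real.exp (-(ε * a))) * (σ * Real.exp (-(σ * a))) := by
        intro σ
        calc (∫ ρ in Ioi ε,
              2 * σ * (a ^ 2 * Real.exp (-(ρ * a))) * (a ^ 2 * Real.exp (-(σ * a))))
            = (2 * σ * a ^ 2 * (a ^ 2 * Real.exp (-(σ * a)))) *
                ∫ ρ in Ioi ε, Real.exp (-(ρ * a)) := by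
              rw [← integral_const_mul]
              refine setIntegral_congr_fun measurableSet_Ioi (fun ρ _ => ?_); ring
          _ = _ := by rw [aux_exp_int ha]; field_simp
      rw [funext inner, integral_const_mul, aux_mul_exp_int ha]
      field_simp
    have death : (∫ ρ in Ioi (0:ℝ),
            ε * ρ * (a ^ 2 * Real.exp (-(ε * a))) * (a ^ 2 * Real.exp (-(ρ * a))))
        = ε * a ^ 2 * Real.exp (-(ε * a)) := by
      have : ∀ ρ : ℝ, ε * ρ * (a ^ 2 * Real.exp (-(ε * a))) * (a ^ 2 * Real.exp (-(ρ * a)))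
          = (ε * a ^ 4 * Real.exp (-(ε * a))) * (ρ * Real.exp (-(ρ * a))) := by
        intro ρ; ring
      rw [funext this, integral_const_mul, aux_mul_exp_int ha]
      field_simp
    rw [birth, death]
    have h1 : HasDerivAt (fun t : ℝ => (1 + t) ^ 2) (2 * a) ς := by
      have := ((hasDerivAt_id ς).const_add 1).fun_pow 2
      simpa [ha_def] using this
    have h2 : HasDerivAt (fun t : ℝ => Real.exp (-(ε * (1 + t))))
        (-ε * Real.exp (-(ε * a))) ς := by
      have hlin : HasDerivAt (fun t : ℝ => -(ε * (1 + t))) (-ε) ς := by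
        have := (((hasDerivAt_id ς).const_add 1).const_mul ε).fun_neg
        simpa using this
      simpa [ha_def, mul_comm] using hlin.exp
    have := h1.fun_mul h2
    refine this.congr_deriv ?_
    ring
  · simp
end

section
/- For all real ς ≥ 0 and ε ≥ 0, the series e^{−ε} + ς(2e^{−ε} − ε e^{−ε}) + Σ_{k=2}^∞ [ (−1)^k ε^{k−2}/(k−2)! + 2(−1)^{k−1} ε^{k−1}/(k−1)! + (−1)^k ε^k/k! ]·e^{−ε}·ς^k converges and its sum equals (1+ς)²·exp(−ε(1+ς)). -/
/-- For all `ς ≥ 0` and `ε ≥ 0`, the VIM series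
`e^{−ε} + ς(2e^{−ε} − ε e^{−ε}) + ∑_{k=2}^∞ [(−1)^k ε^{k−2}/(k−2)! + 2(−1)^{k−1} ε^{k−1}/(k−1)!
 + (−1)^k ε^k/k!] e^{−ε} ς^k` converges with sum `(1+ς)² exp(−ε(1+ς))`. -/
theorem vim_series_sums_to_exact_solution (ς ε : ℝ) (hς : 0 ≤ ς) (hε : 0 ≤ ε) :
    HasSum
      (fun k : ℕ =>
        match k with
        | 0 => Real.exp (-ε)
        | 1 => ς * (2 * Real.exp (-ε) - ε * Real.exp (-ε))
        | (m + 2) =>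
            ((-1 : ℝ) ^ (m + 2) * ε ^ m / (Nat.factorial m : ℝ) +
              2 * (-1 : ℝ) ^ (m + 1) * ε ^ (m + 1) / (Nat.factorial (m + 1) : ℝ) +
              (-1 : ℝ) ^ (m + 2) * ε ^ (m + 2) / (Nat.factorial (m + 2) : ℝ)) *
              Real.exp (-ε) * ς ^ (m + 2))
      ((1 + ς) ^ 2 * Real.exp (-(ε * (1 + ς)))) := by
  set E := Real.exp (-(ε * ς)) with hEdef
  have hE : HasSum (fun n : ℕ => (-(ε * ς)) ^ n / (Nat.factorial n : ℝ)) E := by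
    rw [hEdef, Real.exp_eq_exp_ℝ]
    exact NormedSpace.expSeries_div_hasSum_exp (-(ε * ς))
  set h : ℕ → ℝ := fun n => (-(ε * ς)) ^ n / (Nat.factorial n : ℝ) with hh
  set g1 : ℕ → ℝ := fun k => match k with | 0 => 0 | (n+1) => h n with hg1def
  set g2 : ℕ → ℝ := fun k => match k with | 0 => 0 | 1 => 0 | (n+2) => h n with hg2def
  have hg1 : HasSum g1 E := by
    have : HasSum (fun n => g1 (n + 1)) E := hE
    have := (hasSum_nat_add_iff (f := g1) 1).mp this
    simpa [show g1 0 = 0 from rfl] using this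
  have hg2 : HasSum g2 E := by
    have : HasSum (fun n => g2 (n + 2)) E := hE
    have := (hasSum_nat_add_iff (f := g2) 2).mp this
    simpa [Finset.sum_range_succ, show g2 0 = 0 from rfl, show g2 1 = 0 from rfl] using this
  have hcomb := ((hE.mul_left (Real.exp (-ε))).add
    (hg1.mul_left (2 * ς * Real.exp (-ε)))).add (hg2.mul_left (ς ^ 2 * Real.exp (-ε)))
  have hexp : Real.exp (-ε) * E = Real.exp (-(ε * (1 + ς))) := by
    rw [hEdef, ← Real.exp_add]; ring_nf
  convert hcomb using 1
  · rfl
  · funext k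
    match k with
    | 0 => simp [hh, hg1def, hg2def]
    | 1 =>
      simp only [hh, hg1def, hg2def]
      norm_num
      ring
    | (m + 2) =>
      simp only [hh, hg1def, hg2def]
      have h1 : (-(ε * ς)) ^ m = (-1 : ℝ) ^ m * ε ^ m * ς ^ m := by
        rw [neg_pow, mul_pow]; ring
      have h2 : (-(ε * ς)) ^ (m + 1) = (-1 : ℝ) ^ (m + 1) * ε ^ (m + 1) * ς ^ (m + 1) := by
        rw [neg_pow, mul_pow]; ring
      have h3 : (-(ε * ς)) ^ (m + 2) = (-1 : ℝ) ^ (m + 2) * ε ^ (m + 2) * ς ^ (m + 2) := by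
        rw [neg_pow, mul_pow]; ring
      rw [h1, h2, h3]
      have e1 : (-1 : ℝ) ^ (m + 1) = -(-1 : ℝ) ^ m := by ring
      have e2 : (-1 : ℝ) ^ (m + 2) = (-1 : ℝ) ^ m := by ring
      rw [e1, e2]
      ring
  · rw [← hexp]; ring
end

section
/- Define A[g](ς,ε) = ∫₀^ς ( −∂g/∂τ(τ,ε) + ∫₀^∞∫_ε^∞ 2σ g(τ,ρ)g(τ,σ) dρ dσ − ∫₀^∞ ερ g(τ,ε)g(τ,ρ) dρ ) dτ, and define the VIM iterates by f₀(ς,ε) = e^{−ε}, f₁ = A[f₀], and f_{k+1} = A[f₀ + f₁ + ⋯ + f_k] for k ≥ 1. Then f₁(ς,ε) = ς(2e^{−ε} − ε e^{−ε}), and for every k ≥ 2 and all ς ≥ 0, ε > 0, f_k(ς,ε) = [ (−1)^k ε^{k−2}/(k−2)! + 2(−1)^{k−1} ε^{k−1}/(k−1)! + (−1)^k ε^k/k! ]·e^{−ε}·ς^k. -/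
set_option maxRecDepth 8000


open MeasureTheory Set

/-- The VIM operator (Lagrange multiplier `λ = −1`) for the CBE with `K(ε,ρ)=ερ` and
`b(ε,ρ,σ)=2/ρ` (so `K(ρ,σ)b(ε,ρ,σ)=2σ`):
`A[g](ς,ε) = ∫₀^ς ( −∂g/∂τ(τ,ε) + ∫₀^∞∫_ε^∞ 2σ g(τ,ρ)g(τ,σ) dρ dσ
  − ∫₀^∞ ερ g(τ,ε)g(τ,ρ) dρ ) dτ`. -/
noncomputable def vimOp (g : ℝ → ℝ → ℝ) : ℝ → ℝ → ℝ := fun ς ε =>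
  ∫ τ in (0:ℝ)..ς,
    (-(deriv (fun t => g t ε) τ) +
      (∫ σ in Ioi (0:ℝ), ∫ ρ in Ioi ε, 2 * σ * g τ ρ * g τ σ) -
      ∫ ρ in Ioi (0:ℝ), ε * ρ * g τ ε * g τ ρ)


namespace VimAux

noncomputable def ee (j : ℕ) (x : ℝ) : ℝ := (-x) ^ j / j.factorial

noncomputable def aa : ℕ → ℝ → ℝ
  | 0 => fun x => Real.exp (-x)
  | 1 => fun x => (ee 1 x + 2 * ee 0 x) * Real.exp (-x)
  | (k+2) => fun x => (ee (k+2) x + 2 * ee (k+1) x + ee k x) * Real.exp (-x)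

noncomputable def bb : ℕ → ℝ → ℝ
  | 0 => fun x => ee 0 x
  | (j+1) => fun x => ee (j+1) x + ee j x

lemma hasDerivAt_expNeg (x : ℝ) : HasDerivAt (fun y => Real.exp (-y)) (-Real.exp (-x)) x := by
  simpa [Function.comp_def] using (Real.hasDerivAt_exp (-x)).comp x (hasDerivAt_neg x)

lemma hasDerivAt_ee (j : ℕ) (x : ℝ) : HasDerivAt (ee (j+1)) (-(ee j x)) x := by
  have h : HasDerivAt (fun y : ℝ => (-y) ^ (j+1)) ((((j:ℝ)+1) * (-x) ^ j) * (-1)) x := by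
    have := (hasDerivAt_pow (j+1) (-x)).comp x (hasDerivAt_neg x)
    simpa [Function.comp_def] using this
  have h2 := h.div_const ((j+1).factorial : ℝ)
  have : (fun y : ℝ => (-y) ^ (j+1) / ((j+1).factorial : ℝ)) = ee (j+1) := by
    funext y; simp [ee]
  rw [this] at h2
  convert h2 using 1
  · rfl
  · rfl
  have hj : ((j+1).factorial : ℝ) = ((j:ℝ)+1) * (j.factorial : ℝ) := by
    rw [Nat.factorial_succ]; push_cast; ring
  have hjne : (j.factorial : ℝ) ≠ 0 := Nat.cast_ne_zero.mpr j.factorial_ne_zero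
  have hj1 : ((j:ℝ)+1) ≠ 0 := by positivity
  rw [ee, hj]
  field_simp

lemma integrableOn_pow_mul_exp (m : ℕ) {ε : ℝ} (hε : 0 ≤ ε) :
    IntegrableOn (fun x => x ^ m * Real.exp (-x)) (Ioi ε) := by
  have h := integrableOn_rpow_mul_exp_neg_rpow (p := 1) (s := m)
    (by exact_mod_cast neg_one_lt_zero.trans_le (Nat.cast_nonneg m)) one_pos
  have h' : IntegrableOn (fun x : ℝ => x ^ m * Real.exp (-x)) (Ioi 0) := by
    refine h.congr_fun (fun x _ => ?_) measurableSet_Ioi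
    dsimp only; rw [Real.rpow_natCast, Real.rpow_one]
  exact h'.mono_set (Ioi_subset_Ioi hε)

lemma integral_pow_mul_exp (m : ℕ) :
    ∫ x in Ioi (0:ℝ), x ^ m * Real.exp (-x) = m.factorial := by
  have h := Real.Gamma_eq_integral (s := (m:ℝ)+1) (by positivity)
  have h2 : Real.Gamma ((m:ℝ)+1) = m.factorial := by
    exact_mod_cast Real.Gamma_nat_eq_factorial m
  rw [h2] at h
  rw [h]
  refine setIntegral_congr_fun measurableSet_Ioi (fun x hx => ?_)
  rw [add_sub_cancel_right, Real.rpow_natCast]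
  ring


lemma neg_pow' (x : ℝ) (k : ℕ) : (-x)^k = (-1)^k * x^k := by rw [neg_pow]

lemma ee_eq (j : ℕ) (x : ℝ) : ee j x = (-1)^j * x^j / j.factorial := by rw [ee, neg_pow]

lemma integrableOn_comb (c1 c2 c3 : ℝ) (p q r : ℕ) {ε : ℝ} (hε : 0 ≤ ε) :
    IntegrableOn (fun x => (c1 * x^p + c2 * x^q + c3 * x^r) * Real.exp (-x)) (Ioi ε) := by
  have h : (fun x : ℝ => (c1 * x^p + c2 * x^q + c3 * x^r) * Real.exp (-x))
      = fun x => c1 * (x^p * Real.exp (-x)) + (c2 * (x^q * Real.exp (-x))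
          + c3 * (x^r * Real.exp (-x))) := by
    funext x; ring
  rw [h]
  exact ((integrableOn_pow_mul_exp p hε).const_mul c1).add
    (((integrableOn_pow_mul_exp q hε).const_mul c2).add
      ((integrableOn_pow_mul_exp r hε).const_mul c3))

lemma integral_comb (c1 c2 c3 : ℝ) (p q r : ℕ) :
    ∫ x in Ioi (0:ℝ), (c1 * x^p + c2 * x^q + c3 * x^r) * Real.exp (-x)
      = c1 * p.factorial + c2 * q.factorial + c3 * r.factorial := by
  have h : (fun x : ℝ => (c1 * x^p + c2 * x^q + c3 * x^r) * Real.exp (-x))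
      = fun x => c1 * (x^p * Real.exp (-x)) + (c2 * (x^q * Real.exp (-x))
          + c3 * (x^r * Real.exp (-x))) := by
    funext x; ring
  have B3 : Integrable (fun x : ℝ => c2 * (x ^ q * Real.exp (-x)) + c3 * (x ^ r * Real.exp (-x)))
      (volume.restrict (Ioi (0:ℝ))) :=
    ((integrableOn_pow_mul_exp q le_rfl).const_mul c2).add
      ((integrableOn_pow_mul_exp r le_rfl).const_mul c3)
  rw [h, integral_add ((integrableOn_pow_mul_exp p le_rfl).const_mul c1) B3]
  rw [integral_add ((integrableOn_pow_mul_exp q le_rfl).const_mul c2)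
      ((integrableOn_pow_mul_exp r le_rfl).const_mul c3),
    integral_const_mul, integral_const_mul, integral_const_mul,
    integral_pow_mul_exp, integral_pow_mul_exp, integral_pow_mul_exp]
  ring

lemma aa_comb (i : ℕ) : ∃ (c1 c2 c3 : ℝ) (p q r : ℕ),
    aa i = fun x => (c1 * x^p + c2 * x^q + c3 * x^r) * Real.exp (-x) := by
  match i with
  | 0 => exact ⟨1, 0, 0, 0, 0, 0, by funext x; simp [aa]⟩
  | 1 => exact ⟨-1, 2, 0, 1, 0, 0, by funext x; simp [aa, ee]⟩
  | (k+2) =>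
    refine ⟨(-1)^k/((k+2).factorial : ℝ), 2*(-1)^(k+1)/((k+1).factorial : ℝ),
      (-1)^k/(k.factorial : ℝ), k+2, k+1, k, ?_⟩
    funext x
    simp only [aa, ee_eq]
    ring

lemma integrableOn_aa (i : ℕ) {ε : ℝ} (hε : 0 ≤ ε) : IntegrableOn (aa i) (Ioi ε) := by
  obtain ⟨c1, c2, c3, p, q, r, h⟩ := aa_comb i
  rw [h]; exact integrableOn_comb c1 c2 c3 p q r hε

lemma integrableOn_id_mul_aa (i : ℕ) : IntegrableOn (fun x => x * aa i x) (Ioi (0:ℝ)) := by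
  obtain ⟨c1, c2, c3, p, q, r, h⟩ := aa_comb i
  have : (fun x => x * aa i x) = fun x =>
      (c1 * x^(p+1) + c2 * x^(q+1) + c3 * x^(r+1)) * Real.exp (-x) := by
    funext x; rw [h]; ring
  rw [this]; exact integrableOn_comb _ _ _ _ _ _ le_rfl

lemma tendsto_ee_mul_exp (j : ℕ) :
    Filter.Tendsto (fun y => ee j y * Real.exp (-y)) Filter.atTop (nhds 0) := by
  have h := (Real.tendsto_pow_mul_exp_neg_atTop_nhds_zero j).const_mul ((-1:ℝ)^j / (j.factorial : ℝ))
  rw [mul_zero] at h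
  refine h.congr (fun y => ?_)
  simp only [ee_eq]
  ring


lemma ee_zero_eq (x : ℝ) : ee 0 x = 1 := by simp [ee]

lemma hasDerivAt_ee_zero (x : ℝ) : HasDerivAt (ee 0) 0 x := by
  have : ee 0 = fun _ : ℝ => (1:ℝ) := funext ee_zero_eq
  rw [this]; exact hasDerivAt_const x 1

lemma hasDerivAt_bb (i : ℕ) (x : ℝ) : HasDerivAt (bb (i+1)) (-(bb i x)) x := by
  match i with
  | 0 =>
    have h : HasDerivAt (fun y => ee 1 y + ee 0 y) (-(ee 0 x) + 0) x :=
      (hasDerivAt_ee 0 x).add (hasDerivAt_ee_zero x)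
    have hf : bb 1 = fun y => ee 1 y + ee 0 y := rfl
    rw [hf]
    convert h using 1
    simp [bb]
  | (j+1) =>
    have h : HasDerivAt (fun y => ee (j+2) y + ee (j+1) y) (-(ee (j+1) x) + -(ee j x)) x :=
      (hasDerivAt_ee (j+1) x).add (hasDerivAt_ee j x)
    have hf : bb (j+2) = fun y => ee (j+2) y + ee (j+1) y := rfl
    rw [hf]
    convert h using 1
    simp [bb]; ring

lemma hasDerivAt_anti (i : ℕ) (x : ℝ) :
    HasDerivAt (fun y => -(bb i y) * Real.exp (-y)) (aa i x) x := by
  match i with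
  | 0 =>
    have h := ((hasDerivAt_ee_zero x).fun_neg.fun_mul (hasDerivAt_expNeg x))
    have hf : (fun y => -(bb 0 y) * Real.exp (-y)) = fun y => -(ee 0 y) * Real.exp (-y) := rfl
    rw [hf]
    convert h using 1
    · rfl
    · rfl
    simp [aa, ee_zero_eq]
  | (j+1) =>
    have h := (((hasDerivAt_bb j x).fun_neg.fun_mul (hasDerivAt_expNeg x)))
    convert h using 1
    · rfl
    · rfl
    match j with
    | 0 => simp [aa, bb, ee_zero_eq]; ring
    | (m+1) => simp [aa, bb]; ring

lemma tendsto_anti (i : ℕ) :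
    Filter.Tendsto (fun y => -(bb i y) * Real.exp (-y)) Filter.atTop (nhds 0) := by
  match i with
  | 0 =>
    have h := (tendsto_ee_mul_exp 0).neg
    rw [neg_zero] at h
    exact h.congr (fun y => by simp [bb])
  | (j+1) =>
    have h := ((tendsto_ee_mul_exp (j+1)).add (tendsto_ee_mul_exp j)).neg
    rw [add_zero, neg_zero] at h
    exact h.congr (fun y => by simp [bb]; ring)

lemma tail_aa (i : ℕ) {ε : ℝ} (hε : 0 ≤ ε) :
    ∫ x in Ioi ε, aa i x = bb i ε * Real.exp (-ε) := by
  have h := integral_Ioi_of_hasDerivAt_of_tendsto'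
    (f := fun y => -(bb i y) * Real.exp (-y)) (f' := aa i)
    (fun x _ => hasDerivAt_anti i x) (integrableOn_aa i hε) (tendsto_anti i)
  rw [h]; ring

lemma key (i : ℕ) (ε : ℝ) :
    2 * (bb i ε * Real.exp (-ε)) - ε * aa i ε = ((i:ℝ)+1) * aa (i+1) ε := by
  have hfac : ∀ n : ℕ, ((n+1).factorial : ℝ) = ((n:ℝ)+1) * (n.factorial : ℝ) := by
    intro n; rw [Nat.factorial_succ]; push_cast; ring
  match i with
  | 0 => simp [bb, aa, ee]; ring
  | 1 =>
    simp only [bb, aa, ee_eq]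
    norm_num [Nat.factorial]
    ring
  | (k+2) =>
    simp only [bb, aa, ee_eq]
    have h1 := hfac k
    have h2 := hfac (k+1)
    have h3 := hfac (k+2)
    have hk : (k.factorial : ℝ) ≠ 0 := Nat.cast_ne_zero.mpr k.factorial_ne_zero
    have hk1 : ((k+1).factorial : ℝ) ≠ 0 := Nat.cast_ne_zero.mpr (k+1).factorial_ne_zero
    have hk2 : ((k+2).factorial : ℝ) ≠ 0 := Nat.cast_ne_zero.mpr (k+2).factorial_ne_zero
    have hk3 : ((k+3).factorial : ℝ) ≠ 0 := Nat.cast_ne_zero.mpr (k+3).factorial_ne_zero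
    rw [show k+3 = (k+2)+1 from rfl, hfac (k+2), show k+2 = (k+1)+1 from rfl, hfac (k+1), hfac k]
    push_cast
    field_simp
    ring

lemma moment (i : ℕ) : ∫ x in Ioi (0:ℝ), x * aa i x = if i = 0 then 1 else 0 := by
  have hfac : ∀ n : ℕ, ((n+1).factorial : ℝ) = ((n:ℝ)+1) * (n.factorial : ℝ) := by
    intro n; rw [Nat.factorial_succ]; push_cast; ring
  match i with
  | 0 =>
    have h : (fun x : ℝ => x * aa 0 x)
        = fun x => ((1:ℝ) * x^1 + 0 * x^0 + 0 * x^0) * Real.exp (-x) := by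
      funext x; simp [aa]
    rw [h, integral_comb]
    norm_num [Nat.factorial]
  | 1 =>
    have h : (fun x : ℝ => x * aa 1 x)
        = fun x => ((-1:ℝ) * x^2 + 2 * x^1 + 0 * x^0) * Real.exp (-x) := by
      funext x; simp [aa, ee_eq]; ring
    rw [h, integral_comb]
    norm_num [Nat.factorial]
  | (k+2) =>
    have h : (fun x : ℝ => x * aa (k+2) x)
        = fun x => (((-1:ℝ)^k/((k+2).factorial : ℝ)) * x^(k+3)
            + (2*(-1:ℝ)^(k+1)/((k+1).factorial : ℝ)) * x^(k+2)
            + ((-1:ℝ)^k/(k.factorial : ℝ)) * x^(k+1)) * Real.exp (-x) := by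
      funext x; simp only [aa, ee_eq]; ring
    rw [h, integral_comb]
    have hk : (k.factorial : ℝ) ≠ 0 := Nat.cast_ne_zero.mpr k.factorial_ne_zero
    have hk1 : ((k+1).factorial : ℝ) ≠ 0 := Nat.cast_ne_zero.mpr (k+1).factorial_ne_zero
    have hk2 : ((k+2).factorial : ℝ) ≠ 0 := Nat.cast_ne_zero.mpr (k+2).factorial_ne_zero
    rw [show k+3 = (k+2)+1 from rfl, hfac (k+2), show k+2 = (k+1)+1 from rfl, hfac (k+1), hfac k]
    simp only [if_neg (Nat.succ_ne_zero _)]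
    push_cast
    field_simp
    ring


lemma vim_step (k : ℕ) (ς ε : ℝ) (hε : 0 < ε) (g : ℝ → ℝ → ℝ)
    (hg : ∀ τ x, 0 < x → g τ x = ∑ i ∈ Finset.range (k+1), aa i x * τ^i) :
    vimOp g ς ε = aa (k+1) ε * ς^(k+1) := by
  have hε' : (0:ℝ) ≤ ε := hε.le
  set S : ℝ → ℝ → ℝ := fun τ x => ∑ i ∈ Finset.range (k+1), aa i x * τ^i with hS
  -- moment of S
  have hM : ∀ τ : ℝ, ∫ σ in Ioi (0:ℝ), σ * S τ σ = 1 := by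
    intro τ
    have h1 : (fun σ => σ * S τ σ)
        = fun σ => ∑ i ∈ Finset.range (k+1), σ * aa i σ * τ^i := by
      funext σ; rw [hS]; rw [Finset.mul_sum]; exact Finset.sum_congr rfl fun i _ => by ring
    rw [h1, integral_finset_sum _ (fun i _ => (integrableOn_id_mul_aa i).mul_const (τ^i))]
    have h2 : ∀ i ∈ Finset.range (k+1),
        (∫ σ in Ioi (0:ℝ), σ * aa i σ * τ^i) = (if i = 0 then (1:ℝ) else 0) * τ^i := by
      intro i _
      rw [integral_mul_const, moment i]
    rw [Finset.sum_congr rfl h2]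
    simp
  -- tail of S
  have hT : ∀ τ : ℝ, ∫ ρ in Ioi ε, S τ ρ
      = ∑ i ∈ Finset.range (k+1), bb i ε * Real.exp (-ε) * τ^i := by
    intro τ
    have h1 : (fun ρ => S τ ρ) = fun ρ => ∑ i ∈ Finset.range (k+1), aa i ρ * τ^i := rfl
    rw [h1, integral_finset_sum _ (fun i _ => (integrableOn_aa i hε').mul_const (τ^i))]
    exact Finset.sum_congr rfl fun i _ => by rw [integral_mul_const, tail_aa i hε']
  -- pointwise integrand
  have hint_eq : ∀ τ : ℝ,
      (-(deriv (fun t => g t ε) τ) +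
        (∫ σ in Ioi (0:ℝ), ∫ ρ in Ioi ε, 2 * σ * g τ ρ * g τ σ) -
        ∫ ρ in Ioi (0:ℝ), ε * ρ * g τ ε * g τ ρ)
      = ((k:ℝ)+1) * aa (k+1) ε * τ^k := by
    intro τ
    -- derivative term
    have hgε : (fun t => g t ε) = fun t => S t ε := funext fun t => hg t ε hε
    have hD : deriv (fun t => g t ε) τ
        = ∑ i ∈ Finset.range (k+1), aa i ε * ((i:ℝ) * τ^(i-1)) := by
      rw [hgε, hS]
      exact (HasDerivAt.fun_sum fun i _ => (hasDerivAt_pow i τ).const_mul (aa i ε)).deriv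
    -- birth term
    have hbirth : (∫ σ in Ioi (0:ℝ), ∫ ρ in Ioi ε, 2 * σ * g τ ρ * g τ σ)
        = 2 * ∫ ρ in Ioi ε, S τ ρ := by
      have h1 : ∀ σ ∈ Ioi (0:ℝ), (∫ ρ in Ioi ε, 2 * σ * g τ ρ * g τ σ)
          = (2 * ∫ ρ in Ioi ε, S τ ρ) * (σ * S τ σ) := by
        intro σ hσ
        have h2 : ∀ ρ ∈ Ioi ε, 2 * σ * g τ ρ * g τ σ = (2 * σ * S τ σ) * S τ ρ :=
          fun ρ hρ => by rw [hg τ ρ (hε.trans hρ), hg τ σ hσ]; ring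
        rw [setIntegral_congr_fun measurableSet_Ioi h2, integral_const_mul]
        ring
      rw [setIntegral_congr_fun measurableSet_Ioi h1, integral_const_mul, hM τ, mul_one]
    -- death term
    have hdeath : (∫ ρ in Ioi (0:ℝ), ε * ρ * g τ ε * g τ ρ) = ε * S τ ε := by
      have h2 : ∀ ρ ∈ Ioi (0:ℝ), ε * ρ * g τ ε * g τ ρ = (ε * S τ ε) * (ρ * S τ ρ) :=
        fun ρ hρ => by rw [hg τ ε hε, hg τ ρ hρ]; ring
      rw [setIntegral_congr_fun measurableSet_Ioi h2, integral_const_mul, hM τ, mul_one]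
    rw [hD, hbirth, hdeath, hT τ]
    -- algebra with sums
    have hSτ : S τ ε = ∑ i ∈ Finset.range (k+1), aa i ε * τ^i := rfl
    rw [hSτ]
    have hcomb : 2 * (∑ i ∈ Finset.range (k+1), bb i ε * Real.exp (-ε) * τ^i)
        - ε * ∑ i ∈ Finset.range (k+1), aa i ε * τ^i
        = ∑ i ∈ Finset.range (k+1), ((i:ℝ)+1) * aa (i+1) ε * τ^i := by
      rw [Finset.mul_sum, Finset.mul_sum, ← Finset.sum_sub_distrib]
      refine Finset.sum_congr rfl fun i _ => ?_
      have := key i ε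
      calc 2 * (bb i ε * Real.exp (-ε) * τ ^ i) - ε * (aa i ε * τ ^ i)
          = (2 * (bb i ε * Real.exp (-ε)) - ε * aa i ε) * τ^i := by ring
        _ = ((i:ℝ)+1) * aa (i+1) ε * τ^i := by rw [this]
    have hderiv_sum : ∑ i ∈ Finset.range (k+1), aa i ε * ((i:ℝ) * τ^(i-1))
        = ∑ i ∈ Finset.range k, ((i:ℝ)+1) * aa (i+1) ε * τ^i := by
      rw [Finset.sum_range_succ']
      simp only [Nat.cast_zero, zero_mul, mul_zero, add_zero]
      refine Finset.sum_congr rfl fun i _ => ?_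
      push_cast
      ring
    have hfinal : -(∑ i ∈ Finset.range (k+1), aa i ε * ((i:ℝ) * τ^(i-1)))
        + ∑ i ∈ Finset.range (k+1), ((i:ℝ)+1) * aa (i+1) ε * τ^i
        = ((k:ℝ)+1) * aa (k+1) ε * τ^k := by
      rw [hderiv_sum, Finset.sum_range_succ]
      push_cast
      ring
    linear_combination hcomb + hfinal
  have h0 : vimOp g ς ε = ∫ τ in (0:ℝ)..ς, ((k:ℝ)+1) * aa (k+1) ε * τ^k := by
    rw [vimOp]
    exact intervalIntegral.integral_congr fun τ _ => hint_eq τ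
  rw [h0, intervalIntegral.integral_const_mul, integral_pow]
  have : ((k:ℝ)+1) ≠ 0 := by positivity
  field_simp
  ring


end VimAux

open VimAux

/-- For the VIM iterates `f₀(ς,ε) = e^{−ε}`, `f₁ = A[f₀]`,
`f_{k+1} = A[f₀ + ⋯ + f_k]` (`k ≥ 1`), one has `f₁(ς,ε) = ς(2e^{−ε} − ε e^{−ε})`, and for
every `k ≥ 2`, `ς ≥ 0`, `ε > 0`,
`f_k(ς,ε) = [(−1)^k ε^{k−2}/(k−2)! + 2(−1)^{k−1} ε^{k−1}/(k−1)! + (−1)^k ε^k/k!] e^{−ε} ς^k`. -/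
theorem vim_iterates_closed_form (f : ℕ → ℝ → ℝ → ℝ)
    (h0 : f 0 = fun _ ε => Real.exp (-ε))
    (h1 : f 1 = vimOp (f 0))
    (hk : ∀ k : ℕ, 1 ≤ k →
      f (k + 1) = vimOp (fun ς ε => ∑ i ∈ Finset.range (k + 1), f i ς ε)) :
    (∀ ς : ℝ, ∀ ε : ℝ, 0 < ε →
      f 1 ς ε = ς * (2 * Real.exp (-ε) - ε * Real.exp (-ε))) ∧
    (∀ k : ℕ, 2 ≤ k → ∀ ς : ℝ, 0 ≤ ς → ∀ ε : ℝ, 0 < ε →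
      f k ς ε =
        ((-1 : ℝ) ^ k * ε ^ (k - 2) / (Nat.factorial (k - 2) : ℝ) +
          2 * (-1 : ℝ) ^ (k - 1) * ε ^ (k - 1) / (Nat.factorial (k - 1) : ℝ) +
          (-1 : ℝ) ^ k * ε ^ k / (Nat.factorial k : ℝ)) * Real.exp (-ε) * ς ^ k) := by
  have main : ∀ k : ℕ, ∀ ς ε : ℝ, 0 < ε → f k ς ε = aa k ε * ς ^ k := by
    intro k
    induction k using Nat.strong_induction_on with
    | _ k ih =>
      match k with
      | 0 => intro ς ε hε; rw [h0]; simp [aa]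
      | 1 =>
        intro ς ε hε
        rw [h1]
        have hg : ∀ τ x : ℝ, 0 < x → f 0 τ x = ∑ i ∈ Finset.range 1, aa i x * τ^i := by
          intro τ x hx; rw [h0]; simp [aa]
        rw [vim_step 0 ς ε hε (f 0) hg]
      | (k+2) =>
        intro ς ε hε
        rw [hk (k+1) (by omega)]
        have hg : ∀ τ x : ℝ, 0 < x →
            (∑ i ∈ Finset.range (k+2), f i τ x) = ∑ i ∈ Finset.range (k+2), aa i x * τ^i := by
          intro τ x hx
          exact Finset.sum_congr rfl fun i hi =>
            ih i (Finset.mem_range.mp hi) τ x hx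
        exact vim_step (k+1) ς ε hε _ hg
  constructor
  · intro ς ε hε
    rw [main 1 ς ε hε]
    simp [aa, ee]
    ring
  · intro k hk2 ς _ ε hε
    obtain ⟨m, rfl⟩ : ∃ m, k = m + 2 := ⟨k - 2, by omega⟩
    rw [main (m+2) ς ε hε]
    have e2 : m + 2 - 2 = m := by omega
    have e1 : m + 2 - 1 = m + 1 := by omega
    rw [e2, e1]
    simp only [aa, ee_eq]
    ring
end

section
/- Let 0 < T < 1 and let f : [0,T]×(0,∞) → ℝ be nonnegative and solve ∂f/∂ς(ς,ε) = M₀(ς)·[ (5/2) f(ς,(5/2)ε) + (5/3) f(ς,(5/3)ε) − f(ς,ε) ] with f(0,ε) = e^{−ε}, where M₀(ς) = ∫₀^∞ f(ς,ε)dε. Assume for j ∈ {0,2} that M_j(ς) = ∫₀^∞ ε^j f(ς,ε)dε is finite and differentiable in ς with M_j′(ς) = ∫₀^∞ ε^j ∂f/∂ς(ς,ε)dε, and that M₀(ς) = 1/(1−ς) on [0,T]. Then the second moment satisfies M₂(ς) = 2(1−ς)^{12/25} for all ς ∈ [0,T]. -/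
open MeasureTheory Set

/-- Let `0 < T < 1` and let `f ≥ 0` solve
`∂f/∂ς(ς,ε) = M₀(ς) [ (5/2) f(ς,(5/2)ε) + (5/3) f(ς,(5/3)ε) − f(ς,ε) ]` with
`f(0,ε) = e^{−ε}`, where `M₀(ς) = ∫₀^∞ f(ς,ε) dε`. Assume the moments `M_j` (`j = 0,2`)
are finite and differentiable with `M_j'(ς) = ∫₀^∞ ε^j ∂f/∂ς dε`, and that
`M₀(ς) = 1/(1−ς)` on `[0,T]`. Then `M₂(ς) = 2(1−ς)^{12/25}` on `[0,T]`. -/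
theorem cbe_example3_second_moment
    (T : ℝ) (hT0 : 0 < T) (hT1 : T < 1) (f : ℝ → ℝ → ℝ)
    (hpos : ∀ ς ∈ Icc (0:ℝ) T, ∀ ε > (0:ℝ), 0 ≤ f ς ε)
    (hCBE : ∀ ς ∈ Icc (0:ℝ) T, ∀ ε > (0:ℝ),
      HasDerivAt (fun t => f t ε)
        ((∫ x in Ioi (0:ℝ), f ς x) *
          (5 / 2 * f ς (5 / 2 * ε) + 5 / 3 * f ς (5 / 3 * ε) - f ς ε)) ς)
    (hinit : ∀ ε > (0:ℝ), f 0 ε = Real.exp (-ε))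
    (hMfin : ∀ j ∈ ({0, 2} : Set ℕ), ∀ ς ∈ Icc (0:ℝ) T,
      IntegrableOn (fun ε => ε ^ j * f ς ε) (Ioi 0))
    (hMderiv : ∀ j ∈ ({0, 2} : Set ℕ), ∀ ς ∈ Icc (0:ℝ) T,
      HasDerivAt (fun t => ∫ ε in Ioi (0:ℝ), ε ^ j * f t ε)
        (∫ ε in Ioi (0:ℝ), ε ^ j *
          ((∫ x in Ioi (0:ℝ), f ς x) *
            (5 / 2 * f ς (5 / 2 * ε) + 5 / 3 * f ς (5 / 3 * ε) - f ς ε))) ς)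
    (hM0 : ∀ ς ∈ Icc (0:ℝ) T, (∫ ε in Ioi (0:ℝ), f ς ε) = 1 / (1 - ς)) :
    ∀ ς ∈ Icc (0:ℝ) T,
      (∫ ε in Ioi (0:ℝ), ε ^ 2 * f ς ε) = 2 * (1 - ς) ^ ((12 : ℝ) / 25) := by
  set M2 : ℝ → ℝ := fun t => ∫ ε in Ioi (0:ℝ), ε ^ 2 * f t ε with hM2def
  -- positivity of 1 - ς on the interval
  have h1pos : ∀ ς ∈ Icc (0:ℝ) T, (0:ℝ) < 1 - ς := fun ς hς => by
    have := hς.2; linarith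
  -- scaling lemma
  have scale : ∀ ς ∈ Icc (0:ℝ) T, ∀ c : ℝ, 0 < c →
      IntegrableOn (fun ε => ε ^ 2 * f ς (c * ε)) (Ioi 0) ∧
      (∫ ε in Ioi (0:ℝ), ε ^ 2 * f ς (c * ε)) = c⁻¹ ^ 3 * M2 ς := by
    intro ς hς c hc
    have hg : IntegrableOn (fun x => x ^ 2 * f ς x) (Ioi 0) :=
      hMfin 2 (by simp) ς hς
    have hgc : IntegrableOn (fun ε => (c * ε) ^ 2 * f ς (c * ε)) (Ioi 0) := by
      have := (integrableOn_Ioi_comp_mul_left_iff (fun x => x ^ 2 * f ς x) 0 hc).mpr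
        (by simpa using hg)
      simpa using this
    have hpt : ∀ ε : ℝ, ε ^ 2 * f ς (c * ε) = c⁻¹ ^ 2 * ((c * ε) ^ 2 * f ς (c * ε)) := by
      intro ε; field_simp
    constructor
    · have : (fun ε => ε ^ 2 * f ς (c * ε))
          = fun ε => c⁻¹ ^ 2 * ((c * ε) ^ 2 * f ς (c * ε)) := funext hpt
      rw [this]; exact hgc.const_mul _
    · have h1 : (∫ ε in Ioi (0:ℝ), (c * ε) ^ 2 * f ς (c * ε)) = c⁻¹ * M2 ς := by
        have := integral_comp_mul_left_Ioi (fun x => x ^ 2 * f ς x) 0 hc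
        simpa [smul_eq_mul] using this
      calc (∫ ε in Ioi (0:ℝ), ε ^ 2 * f ς (c * ε))
          = ∫ ε in Ioi (0:ℝ), c⁻¹ ^ 2 * ((c * ε) ^ 2 * f ς (c * ε)) := by
            exact integral_congr_ae (Filter.Eventually.of_forall fun ε => hpt ε)
        _ = c⁻¹ ^ 2 * (c⁻¹ * M2 ς) := by rw [integral_const_mul, h1]
        _ = c⁻¹ ^ 3 * M2 ς := by ring
  -- the ODE for M2
  have key : ∀ ς ∈ Icc (0:ℝ) T,
      HasDerivAt M2 ((1 - ς)⁻¹ * (-(12 / 25) * M2 ς)) ς := by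
    intro ς hς
    have h2 := hMderiv 2 (by simp) ς hς
    have hint2 : IntegrableOn (fun ε => ε ^ 2 * f ς ε) (Ioi 0) := hMfin 2 (by simp) ς hς
    have hs1 := scale ς hς (5 / 2) (by norm_num)
    have hs2 := scale ς hς (5 / 3) (by norm_num)
    have hval : (∫ ε in Ioi (0:ℝ), ε ^ 2 *
        ((∫ x in Ioi (0:ℝ), f ς x) *
          (5 / 2 * f ς (5 / 2 * ε) + 5 / 3 * f ς (5 / 3 * ε) - f ς ε)))
        = (1 - ς)⁻¹ * (-(12 / 25) * M2 ς) := by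
      have hpt : ∀ ε : ℝ, ε ^ 2 *
          ((∫ x in Ioi (0:ℝ), f ς x) *
            (5 / 2 * f ς (5 / 2 * ε) + 5 / 3 * f ς (5 / 3 * ε) - f ς ε))
          = (∫ x in Ioi (0:ℝ), f ς x) *
            (5 / 2 * (ε ^ 2 * f ς (5 / 2 * ε)) + 5 / 3 * (ε ^ 2 * f ς (5 / 3 * ε))
              - ε ^ 2 * f ς ε) := fun ε => by ring
      rw [integral_congr_ae (Filter.Eventually.of_forall hpt), integral_const_mul]
      have hadd : (∫ ε in Ioi (0:ℝ),
          (5 / 2 * (ε ^ 2 * f ς (5 / 2 * ε)) + 5 / 3 * (ε ^ 2 * f ς (5 / 3 * ε))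
            - ε ^ 2 * f ς ε))
          = 5 / 2 * (∫ ε in Ioi (0:ℝ), ε ^ 2 * f ς (5 / 2 * ε))
            + 5 / 3 * (∫ ε in Ioi (0:ℝ), ε ^ 2 * f ς (5 / 3 * ε))
            - ∫ ε in Ioi (0:ℝ), ε ^ 2 * f ς ε := by
        have hA : IntegrableOn (fun ε => 5 / 2 * (ε ^ 2 * f ς (5 / 2 * ε))) (Ioi 0) :=
          hs1.1.const_mul (5/2 : ℝ)
        have hB : IntegrableOn (fun ε => 5 / 3 * (ε ^ 2 * f ς (5 / 3 * ε))) (Ioi 0) :=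
          hs2.1.const_mul (5/3 : ℝ)
        have hAB : IntegrableOn
            (fun ε => 5 / 2 * (ε ^ 2 * f ς (5 / 2 * ε)) + 5 / 3 * (ε ^ 2 * f ς (5 / 3 * ε)))
            (Ioi 0) := hA.add hB
        rw [integral_sub hAB hint2, integral_add hA hB,
          integral_const_mul, integral_const_mul]
      rw [hadd, hs1.2, hs2.2, hM0 ς hς]
      rw [one_div]
      ring
    rw [← hval]
    exact h2
  -- derivative of the rpow factor
  have hrpow : ∀ ς ∈ Icc (0:ℝ) T,
      HasDerivAt (fun t => (1 - t) ^ (-((12:ℝ) / 25)))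
        ((-((12:ℝ) / 25)) * (1 - ς) ^ (-((12:ℝ) / 25) - 1) * (-1)) ς := by
    intro ς hς
    have h1 : HasDerivAt (fun t : ℝ => 1 - t) (-1) ς := by
      simpa using (hasDerivAt_id ς).const_sub (1:ℝ)
    have h2 := Real.hasDerivAt_rpow_const
      (x := 1 - ς) (p := -((12:ℝ) / 25)) (Or.inl (ne_of_gt (h1pos ς hς)))
    exact h2.comp ς h1
  -- G is constant
  set G : ℝ → ℝ := fun t => M2 t * (1 - t) ^ (-((12:ℝ) / 25)) with hGdef
  have hGderiv : ∀ ς ∈ Icc (0:ℝ) T, HasDerivAt G 0 ς := by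
    intro ς hς
    have h := (key ς hς).mul (hrpow ς hς)
    have hz : (1 - ς)⁻¹ * (-(12 / 25) * M2 ς) * (1 - ς) ^ (-((12:ℝ) / 25))
        + M2 ς * ((-((12:ℝ) / 25)) * (1 - ς) ^ (-((12:ℝ) / 25) - 1) * (-1)) = 0 := by
      have hsub : (1 - ς) ^ (-((12:ℝ) / 25) - 1)
          = (1 - ς) ^ (-((12:ℝ) / 25)) * (1 - ς)⁻¹ := by
        rw [Real.rpow_sub (h1pos ς hς), Real.rpow_one, div_eq_mul_inv]
      rw [hsub]; ring
    rw [← hz]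
    exact h
  have hGconst : ∀ ς ∈ Icc (0:ℝ) T, G ς = G 0 := by
    intro ς hς
    exact constant_of_has_deriv_right_zero
      (fun x hx => (hGderiv x hx).continuousAt.continuousWithinAt)
      (fun x hx => ((hGderiv x (Ico_subset_Icc_self hx)).hasDerivWithinAt)) ς hς
  -- value at 0
  have hM20 : M2 0 = 2 := by
    have hcong : M2 0 = ∫ ε in Ioi (0:ℝ), Real.exp (-ε) * ε ^ ((3:ℝ) - 1) := by
      refine setIntegral_congr_fun measurableSet_Ioi fun ε hε => ?_
      have hε' : (0:ℝ) < ε := hε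
      rw [hinit ε hε']
      rw [show (3:ℝ) - 1 = ((2:ℕ):ℝ) by norm_num, Real.rpow_natCast]
      ring
    have hG3 : Real.Gamma 3 = ∫ ε in Ioi (0:ℝ), Real.exp (-ε) * ε ^ ((3:ℝ) - 1) :=
      Real.Gamma_eq_integral (by norm_num)
    have hG3v : Real.Gamma 3 = 2 := by
      have := Real.Gamma_nat_eq_factorial 2
      norm_num at this
      convert this using 2
      norm_num
    rw [hcong, ← hG3, hG3v]
  have hG0 : G 0 = 2 := by
    simp only [hGdef]
    rw [sub_zero, Real.one_rpow, mul_one, hM20]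
  -- conclude
  intro ς hς
  have h1 := h1pos ς hς
  have hGς : M2 ς * (1 - ς) ^ (-((12:ℝ) / 25)) = 2 := by
    have := hGconst ς hς
    rw [hG0] at this
    exact this
  have hrw : (1 - ς) ^ (-((12:ℝ) / 25)) = ((1 - ς) ^ ((12:ℝ) / 25))⁻¹ :=
    Real.rpow_neg h1.le _
  rw [hrw] at hGς
  have hne : (1 - ς) ^ ((12:ℝ) / 25) ≠ 0 := ne_of_gt (Real.rpow_pos_of_pos h1 _)
  field_simp at hGς
  linarith [hGς]
end
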